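/- arXiv:1910.11817 — 4 statements merged into one kernel-verified Lean document; each statement's English description precedes it below -/
import Mathlib

section
/- For every positive integer n with binary expansion n = ∑_{k≥0} n_k 2^k and every j ∈ ℕ, if x lies in I_j \ I_{j+1} (i.e. the first j binary coordinates of x are 0 and the j-th is 1), then the Walsh–Dirichlet kernel satisfies |D_n(x)| = |∑_{k=0}^{j-1} n_k 2^k − n_j 2^j|. -/
open MeasureTheory Finset

noncomputable section

/-- The dyadic group: countable product of ℤ/2. -/
abbrev G := ℕ → ZMod 2

/-- Binary digits of a real number, as an element of the dyadic group. -/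
def toG (x : ℝ) : G := fun n => ((⌊x * 2 ^ (n + 1)⌋ : ℤ) : ZMod 2)

/-- Haar (product) measure on the dyadic group, realized as the pushforward
of Lebesgue measure on `[0,1)` under the binary digit map. -/
def muG : Measure G := (volume.restrict (Set.Ico (0:ℝ) 1)).map toG

/-- Walsh–Paley functions. -/
def walsh (m : ℕ) (x : G) : ℝ :=
  ∏ k ∈ Finset.range m, if m.testBit k then (-1 : ℝ) ^ ((x k).val) else 1

/-- Walsh–Dirichlet kernel. -/
def Dir (n : ℕ) (x : G) : ℝ := ∑ k ∈ Finset.range n, walsh k x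

/-- Dyadic interval `I_n` of rank `n` about `0`. -/
def Iset (n : ℕ) : Set G := {x | ∀ i < n, x i = 0}

/-- `k`-th binary digit of `n`, as a natural number. -/
def bit (n k : ℕ) : ℕ := (n.testBit k).toNat

/-- `α_i(n) = |∑_{k<i} n_k 2^k − n_i 2^i|`. -/
def alpha (n i : ℕ) : ℤ :=
  |(∑ k ∈ Finset.range i, (bit n k : ℤ) * 2 ^ k) - (bit n i : ℤ) * 2 ^ i|

/-- Binary variation `V(n) = n_0 + ∑_{k≥1} |n_k − n_{k−1}|`. -/
def V (n : ℕ) : ℕ :=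
  bit n 0 + ∑ k ∈ Finset.range n, if n.testBit (k+1) ≠ n.testBit k then 1 else 0

/-- `A(n)`: indices where consecutive binary digits differ (with `n_{−1} = 0`). -/
def Aset (n : ℕ) : Finset ℕ :=
  (Finset.range (n+1)).filter
    (fun i => if i = 0 then n.testBit 0 else n.testBit i ≠ n.testBit (i-1))

/-- `S(n) = ∑_{i ∈ A(n)} α_i(n)/2^{i+1}`. -/
def S (n : ℕ) : ℝ := ∑ i ∈ Aset n, (alpha n i : ℝ) / 2 ^ (i+1)

/-- `j`-th binary digit of a real number `t ∈ [0,1)`. -/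
def tdig (t : ℝ) (j : ℕ) : ℕ := (⌊t * 2 ^ (j+1)⌋ % 2).toNat

/-- `m = ∑_{i=0}^{N-1} t_{i+1} 2^i`. -/
def mOf (t : ℝ) (N : ℕ) : ℕ := ∑ i ∈ Finset.range N, tdig t (i+1) * 2 ^ i

/-- Conjugate Walsh–Dirichlet kernel
`D̃_n^{(t)} = D_n − 2 w_m D_m − 2 t_{N+1}(D_n − D_{2^N})` where `m = mOf t N`. -/
def Dconj (t : ℝ) (N n : ℕ) (x : G) : ℝ :=
  Dir n x - 2 * walsh (mOf t N) x * Dir (mOf t N) x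
    - 2 * (tdig t (N+1) : ℝ) * (Dir n x - Dir (2^N) x)

/-- Lebesgue constant of the conjugate transform. -/
def Leb (t : ℝ) (N n : ℕ) : ℝ := ∫ x, |Dconj t N n x| ∂muG

/-- `T(a,b) = {i : 1 ≤ i ≤ N−1, a_i ≠ a_{i−1}, b_i = b_{i−1}}`. -/
def Tset (N a b : ℕ) : Finset ℕ :=
  (Finset.Icc 1 (N-1)).filter
    (fun i => a.testBit i ≠ a.testBit (i-1) ∧ b.testBit i = b.testBit (i-1))

/-!
If `x ∈ I_j`, then `w_k(x)` depends only on `⌊k / 2^j⌋`, and if moreover `x_j = 1`, its values on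
the blocks `2c` and `2c + 1` are opposite. Writing `n = 2^j q + r` with `r < 2^j`, the complete
blocks therefore cancel in pairs, leaving `2^j w_{2^j (q-1)}(x)` if `q` is odd, plus `r w_{2^j q}(x)`.
Hence `D_n(x) = w_{2^j q}(x) (r − n_j 2^j)`, and `r = ∑_{k<j} n_k 2^k`.
-/

theorem sum_range_bit_mul_two_pow (n i : ℕ) : ∑ k ∈ range i, bit n k * 2 ^ k = n % 2 ^ i := by
  induction i with
  | zero => simp [Nat.mod_one]
  | succ i ih => rw [sum_range_succ, ih, Nat.mod_pow_succ, bit, Nat.toNat_testBit, mul_comm]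

section Walsh

theorem walsh_eq_prod_range {m M : ℕ} (hm : m < 2 ^ M) (x : G) :
    walsh m x = ∏ k ∈ range M, if m.testBit k then (-1 : ℝ) ^ (x k).val else 1 := by
  have trivial_factor {N : ℕ} (hN : m < 2 ^ N) :
      ∀ k ∈ range (max m M), k ∉ range N →
        (if m.testBit k then (-1 : ℝ) ^ (x k).val else 1) = 1 := fun k _ hk => by
    rw [Nat.testBit_eq_false_of_lt (hN.trans_le (Nat.pow_le_pow_right two_pos
      (by simpa using hk))), if_neg Bool.false_ne_true]
  rw [walsh, prod_subset (range_subset_range.2 (le_max_left m M))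
      (trivial_factor Nat.lt_two_pow_self),
    prod_subset (range_subset_range.2 (le_max_right m M)) (trivial_factor hm)]

theorem abs_walsh (m : ℕ) (x : G) : |walsh m x| = 1 := by
  rw [walsh, abs_prod]
  exact prod_eq_one fun k _ => by split_ifs <;> simp

theorem walsh_two_pow (j : ℕ) (x : G) : walsh (2 ^ j) x = (-1) ^ (x j).val := by
  rw [walsh_eq_prod_range (Nat.pow_lt_pow_right one_lt_two (Nat.lt_succ_self j))]
  simp [Nat.testBit_two_pow]

/-- Bits of `2 ^ i * a` and of `b < 2 ^ i` do not overlap, so the factors of `w_{2^i a + b}` split. -/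
theorem walsh_two_pow_mul_add {i a b : ℕ} (hb : b < 2 ^ i) (x : G) :
    walsh (2 ^ i * a + b) x = walsh (2 ^ i * a) x * walsh b x := by
  have hM : 2 ^ i * a + b < 2 ^ (2 ^ i * a + b) := Nat.lt_two_pow_self
  rw [walsh_eq_prod_range hM, walsh_eq_prod_range ((Nat.le_add_right _ b).trans_lt hM),
    walsh_eq_prod_range ((Nat.le_add_left b _).trans_lt hM), ← prod_mul_distrib]
  refine prod_congr rfl fun k _ => ?_
  rw [Nat.two_pow_add_eq_or_of_lt hb, Nat.testBit_or, Nat.testBit_two_pow_mul]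
  rcases lt_or_ge k i with hk | hk
  · simp [Nat.not_le.2 hk]
  · simp [Nat.testBit_eq_false_of_lt (hb.trans_le (Nat.pow_le_pow_right two_pos hk))]

variable {j : ℕ} {x : G}

theorem walsh_eq_one_of_mem_Iset (hx : x ∈ Iset j) {b : ℕ} (hb : b < 2 ^ j) : walsh b x = 1 := by
  rw [walsh_eq_prod_range hb]
  exact prod_eq_one fun k hk => by simp [hx k (mem_range.1 hk)]

theorem walsh_eq_walsh_two_pow_mul_div (hx : x ∈ Iset j) (m : ℕ) :
    walsh m x = walsh (2 ^ j * (m / 2 ^ j)) x := by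
  have hmod : m % 2 ^ j < 2 ^ j := Nat.mod_lt _ (by positivity)
  conv_lhs => rw [← Nat.div_add_mod m (2 ^ j)]
  rw [walsh_two_pow_mul_add hmod, walsh_eq_one_of_mem_Iset hx hmod, mul_one]

theorem walsh_two_pow_mul_two_mul_add_one (hxj : x j = 1) (c : ℕ) :
    walsh (2 ^ j * (2 * c + 1)) x = -walsh (2 ^ j * (2 * c)) x := by
  have hlt : 2 ^ j < 2 ^ (j + 1) := Nat.pow_lt_pow_right one_lt_two (Nat.lt_succ_self j)
  have hodd : 2 ^ j * (2 * c + 1) = 2 ^ (j + 1) * c + 2 ^ j := by ring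
  have heven : 2 ^ j * (2 * c) = 2 ^ (j + 1) * c := by ring
  rw [hodd, heven, walsh_two_pow_mul_add hlt, walsh_two_pow, hxj]
  simp [ZMod.val_one]

end Walsh

section Dirichlet

variable {j : ℕ} {x : G}

theorem Dir_two_pow_mul_add (hx : x ∈ Iset j) (q : ℕ) {r : ℕ} (hr : r ≤ 2 ^ j) :
    Dir (2 ^ j * q + r) x = Dir (2 ^ j * q) x + r * walsh (2 ^ j * q) x := by
  have hblock : ∀ k ∈ range r, walsh (2 ^ j * q + k) x = walsh (2 ^ j * q) x := fun k hk => by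
    rw [walsh_eq_walsh_two_pow_mul_div hx, Nat.mul_add_div (by positivity),
      Nat.div_eq_of_lt ((mem_range.1 hk).trans_le hr), add_zero]
  rw [Dir, sum_range_add, sum_congr rfl hblock, sum_const, card_range, nsmul_eq_mul, ← Dir]

theorem Dir_two_pow_mul_two_mul (hx : x ∈ Iset j) (hxj : x j = 1) (c : ℕ) :
    Dir (2 ^ j * (2 * c)) x = 0 := by
  induction c with
  | zero => simp [Dir]
  | succ c ih =>
    have hstep : 2 ^ j * (2 * (c + 1)) = 2 ^ j * (2 * c + 1) + 2 ^ j := by ring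
    have hodd : 2 ^ j * (2 * c + 1) = 2 ^ j * (2 * c) + 2 ^ j := by ring
    rw [hstep, Dir_two_pow_mul_add hx _ le_rfl, hodd, Dir_two_pow_mul_add hx _ le_rfl, ih,
      ← hodd, walsh_two_pow_mul_two_mul_add_one hxj]
    ring

theorem Dir_two_pow_mul (hx : x ∈ Iset j) (hxj : x j = 1) (q : ℕ) :
    Dir (2 ^ j * q) x = -((q % 2 : ℕ) : ℝ) * 2 ^ j * walsh (2 ^ j * q) x := by
  obtain ⟨c, rfl | rfl⟩ := Nat.even_or_odd' q
  · simp [Dir_two_pow_mul_two_mul hx hxj]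
  · have hodd : 2 ^ j * (2 * c + 1) = 2 ^ j * (2 * c) + 2 ^ j := by ring
    rw [hodd, Dir_two_pow_mul_add hx _ le_rfl, Dir_two_pow_mul_two_mul hx hxj, ← hodd,
      walsh_two_pow_mul_two_mul_add_one hxj, Nat.mul_add_mod_self_left]
    push_cast
    ring

theorem Dir_eq_walsh_mul (hx : x ∈ Iset j) (hxj : x j = 1) (n : ℕ) :
    Dir n x = walsh (2 ^ j * (n / 2 ^ j)) x * ((n % 2 ^ j : ℕ) - (bit n j : ℝ) * 2 ^ j) := by
  conv_lhs => rw [← Nat.div_add_mod n (2 ^ j)]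
  rw [Dir_two_pow_mul_add hx _ (Nat.mod_lt _ (by positivity)).le, Dir_two_pow_mul hx hxj, bit,
    Nat.toNat_testBit]
  ring

end Dirichlet

theorem abs_Dir_eq_alpha_general (n j : ℕ) (x : G)
    (hx : ∀ i < j, x i = 0) (hxj : x j = 1) :
    |Dir n x| = (alpha n j : ℝ) := by
  have hlow : ∑ k ∈ range j, (bit n k : ℤ) * 2 ^ k = ((n % 2 ^ j : ℕ) : ℤ) := by
    exact_mod_cast sum_range_bit_mul_two_pow n j
  rw [Dir_eq_walsh_mul hx hxj, abs_mul, abs_walsh, one_mul, alpha, hlow]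
  norm_cast

/-- On `I_j \ I_{j+1}`, `|D_n| = α_j(n)`. -/
theorem abs_Dir_eq_alpha (n j : ℕ) (hn : 0 < n) (x : G)
    (hx : ∀ i < j, x i = 0) (hxj : x j = 1) :
    |Dir n x| = (alpha n j : ℝ) :=
  abs_Dir_eq_alpha_general n j x hx hxj
end
end

section
/- Let n' be the positive integer with binary expansion n' = 2^1 + 2^3 + ··· + 2^{2s−1} (alternating digits 0,1,0,1,… up to position 2s−1). Then for 1 ≤ m ≤ s, α_{2m}(n') = (2^{2m+1} − 2)/3 and α_{2m−1}(n') = (2^{2m} + 2)/3. -/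
open MeasureTheory Finset

noncomputable section

/-!
The lower part `∑_{k<i} n_k 2^k` of `n` is `n % 2^i`. Since the binary digits of `n'`
alternate, `n' % 2^j` is the alternating number with `⌊j/2⌋` nonzero digits, i.e.
`(2^{2⌊j/2⌋+1} - 2)/3`.
Because `n'_{2m} = 0` this gives `α_{2m}` directly, and because `n'_{2m-1} = 1`,
`α_{2m-1} = 2^{2m-1} - n' % 2^{2m-1}`.
-/

theorem mod_two_pow_succ_eq_add_bit (n i : ℕ) :
    n % 2 ^ (i + 1) = n % 2 ^ i + bit n i * 2 ^ i := by
  rw [Nat.mod_pow_succ, bit, Nat.toNat_testBit, Nat.mul_comm]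

theorem alpha_eq_abs_mod (n i : ℕ) :
    alpha n i = |((n % 2 ^ i : ℕ) : ℤ) - bit n i * 2 ^ i| := by
  rw [alpha, ← sum_range_bit_mul_two_pow]
  push_cast
  rfl

/-- The paper's `n'`. -/
def altBits (s : ℕ) : ℕ := ∑ k ∈ Icc 1 s, 2 ^ (2 * k - 1)

theorem altBits_succ (s : ℕ) : altBits (s + 1) = 2 ^ (2 * s + 1) + altBits s := by
  rw [altBits, sum_Icc_succ_top (by omega), add_comm, altBits]
  congr 2

theorem three_mul_altBits_add_two (s : ℕ) : 3 * altBits s + 2 = 2 ^ (2 * s + 1) := by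
  induction s with
  | zero => rfl
  | succ s ih =>
    rw [altBits_succ, show 2 * (s + 1) + 1 = 2 * s + 1 + 2 by ring, pow_add 2 _ 2]
    linarith

theorem altBits_lt_two_pow (s : ℕ) : altBits s < 2 ^ (2 * s) := by
  have := three_mul_altBits_add_two s
  rw [pow_succ] at this
  omega

theorem testBit_altBits (s j : ℕ) :
    (altBits s).testBit j = decide (j % 2 = 1 ∧ j < 2 * s) := by
  induction s with
  | zero => simp [altBits]
  | succ s ih =>
    have hlt : altBits s < 2 ^ (2 * s + 1) :=
      (altBits_lt_two_pow s).trans (Nat.pow_lt_pow_right (by norm_num) (by omega))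
    rw [altBits_succ, ← Nat.mul_one (2 ^ _), Nat.testBit_two_pow_mul_add _ hlt]
    split_ifs with hj
    · rw [ih, decide_eq_decide]
      omega
    · rw [Bool.eq_iff_iff, Nat.testBit_one_eq_true_iff_self_eq_zero, decide_eq_true_iff]
      omega

theorem altBits_mod_two_pow {s j : ℕ} (hj : j ≤ 2 * s) :
    altBits s % 2 ^ j = altBits (j / 2) := by
  refine Nat.eq_of_testBit_eq fun i => ?_
  rw [Nat.testBit_mod_two_pow, testBit_altBits, testBit_altBits, ← Bool.decide_and,
    decide_eq_decide]
  omega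

theorem three_mul_alpha_altBits_two_mul {s m : ℕ} (hms : m ≤ s) :
    3 * alpha (altBits s) (2 * m) = 2 ^ (2 * m + 1) - 2 := by
  have hbit : bit (altBits s) (2 * m) = 0 := by simp [bit, testBit_altBits]
  rw [alpha_eq_abs_mod, altBits_mod_two_pow (by omega), hbit, Nat.mul_div_cancel_left _ two_pos]
  have h3 : 3 * (altBits m : ℤ) + 2 = 2 ^ (2 * m + 1) := mod_cast three_mul_altBits_add_two m
  push_cast
  rw [zero_mul, sub_zero, abs_of_nonneg (by positivity)]
  linarith

theorem three_mul_alpha_altBits_two_mul_add_one {s m : ℕ} (hms : m < s) :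
    3 * alpha (altBits s) (2 * m + 1) = 2 ^ (2 * m + 2) + 2 := by
  have hbit : bit (altBits s) (2 * m + 1) = 1 := by simp [bit, testBit_altBits]; omega
  rw [alpha_eq_abs_mod, altBits_mod_two_pow (by omega), hbit, show (2 * m + 1) / 2 = m by omega]
  have h3 : 3 * (altBits m : ℤ) + 2 = 2 ^ (2 * m + 1) := mod_cast three_mul_altBits_add_two m
  push_cast
  rw [one_mul, abs_of_nonpos (by omega), pow_succ 2 (2 * m + 1)]
  linarith

theorem alpha_alternating_general (s m : ℕ) (hm : 1 ≤ m) (hms : m ≤ s) :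
    (alpha (∑ k ∈ Finset.Icc 1 s, 2^(2*k-1)) (2*m) : ℝ) = (2^(2*m+1) - 2) / 3 ∧
    (alpha (∑ k ∈ Finset.Icc 1 s, 2^(2*k-1)) (2*m-1) : ℝ) = (2^(2*m) + 2) / 3 := by
  obtain ⟨m, rfl⟩ : ∃ m', m = m' + 1 := ⟨m - 1, by omega⟩
  have heven := three_mul_alpha_altBits_two_mul hms
  have hodd := three_mul_alpha_altBits_two_mul_add_one (show m < s by omega)
  rw [show 2 * (m + 1) - 1 = 2 * m + 1 by omega]
  constructor
  · rw [eq_div_iff three_ne_zero, mul_comm]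
    exact_mod_cast heven
  · rw [eq_div_iff three_ne_zero, mul_comm, show 2 * (m + 1) = 2 * m + 2 by ring]
    exact_mod_cast hodd

/-- For `n' = 2 + 2^3 + ⋯ + 2^{2s−1}`, explicit values of `α_{2m}` and `α_{2m−1}`. -/
theorem alpha_alternating (s m : ℕ) (hs : 1 ≤ s) (hm : 1 ≤ m) (hms : m ≤ s) :
    (alpha (∑ k ∈ Finset.Icc 1 s, 2^(2*k-1)) (2*m) : ℝ) = (2^(2*m+1) - 2) / 3 ∧
    (alpha (∑ k ∈ Finset.Icc 1 s, 2^(2*k-1)) (2*m-1) : ℝ) = (2^(2*m) + 2) / 3 :=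
  alpha_alternating_general s m hm hms
end
end

section
/- Let n' = ∑_{m=1}^{s} 2^{2m−1} and let A(n') = {i ≥ 1 : n'_i ≠ n'_{i−1}} ∪ ({0} if n'_0 = 1). Then S(n') := ∑_{i ∈ A(n')} α_i(n')/2^{i+1} = (2/3)s + (1/9)(1 − 4^{−s}). -/
open MeasureTheory Finset

noncomputable section

def nn (s : ℕ) : ℕ := ∑ k ∈ Finset.Icc 1 s, 2^(2*k-1)

lemma nn_zero : nn 0 = 0 := by simp [nn]

lemma nn_succ (s : ℕ) : nn (s+1) = nn s + 2^(2*s+1) := by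
  rw [nn, Finset.sum_Icc_succ_top (by omega), show 2*(s+1)-1 = 2*s+1 from by omega]; rfl

lemma nn_lt (s : ℕ) : nn s < 2^(2*s) := by
  induction s with
  | zero => simp [nn_zero]
  | succ s ih =>
    rw [nn_succ]
    have h1 : 2^(2*(s+1)) = 4 * 2^(2*s) := by
      rw [show 2*(s+1) = 2*s+2 from by ring, pow_add]; ring
    have h2 : 2^(2*s+1) = 2 * 2^(2*s) := by rw [pow_succ]; ring
    omega

lemma le_nn (s : ℕ) : 2*s ≤ nn s := by
  induction s with
  | zero => simp [nn_zero]
  | succ s ih =>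
    rw [nn_succ]
    have : 2 ≤ 2^(2*s+1) := by
      calc 2 = 2^1 := rfl
      _ ≤ 2^(2*s+1) := Nat.pow_le_pow_right (by norm_num) (by omega)
    omega

lemma three_nn (s : ℕ) : 3 * nn s + 2 = 2 * 4^s := by
  induction s with
  | zero => simp [nn_zero]
  | succ s ih =>
    have h2 : 2^(2*s+1) = 2 * 4^s := by
      rw [pow_succ, pow_mul]; ring
    rw [nn_succ, Nat.mul_add, h2, pow_succ]; omega

lemma testBit_nn (s i : ℕ) : (nn s).testBit i = true ↔ (i % 2 = 1 ∧ i < 2*s) := by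
  induction s generalizing i with
  | zero => simp [nn_zero]
  | succ s ih =>
    have hb : nn s < 2^(2*s+1) :=
      lt_of_lt_of_le (nn_lt s) (Nat.pow_le_pow_right (by norm_num) (by omega))
    have heq : nn (s+1) = 2^(2*s+1) * 1 + nn s := by rw [nn_succ]; ring
    rw [heq, Nat.testBit_two_pow_mul_add 1 hb i]
    by_cases h : i < 2*s+1
    · simp only [if_pos h, ih]
      constructor
      · rintro ⟨h1, h2⟩; exact ⟨h1, by omega⟩
      · rintro ⟨h1, h2⟩; exact ⟨h1, by omega⟩
    · simp only [if_neg h]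
      by_cases h' : i = 2*s+1
      · subst h'
        simp only [Nat.sub_self, Nat.testBit_zero]
        constructor
        · intro _; omega
        · intro _; simp
      · have : 1 < 2^(i - (2*s+1)) := by
          have : 1 ≤ i - (2*s+1) := by omega
          calc 1 < 2^1 := by norm_num
          _ ≤ 2^(i - (2*s+1)) := Nat.pow_le_pow_right (by norm_num) this
        rw [Nat.testBit_lt_two_pow this]
        simp; omega

lemma testBit_nn_false (s i : ℕ) (h : ¬ (i % 2 = 1 ∧ i < 2*s)) : (nn s).testBit i = false := by
  rw [← Bool.not_eq_true, testBit_nn]; exact h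

lemma Aset_nn (s : ℕ) : Aset (nn s) = Finset.Icc 1 (2*s) := by
  ext i
  simp only [Aset, Finset.mem_filter, Finset.mem_range, Finset.mem_Icc]
  constructor
  · rintro ⟨h1, h2⟩
    rcases Nat.eq_zero_or_pos i with h0 | h0
    · subst h0
      rw [if_pos rfl] at h2
      have := (testBit_nn s 0).mp h2
      omega
    · rw [if_neg (by omega)] at h2
      refine ⟨h0, ?_⟩
      by_contra hc
      push_neg at hc
      rw [testBit_nn_false s i (by omega), testBit_nn_false s (i-1) (by omega)] at h2
      simp at h2
  · rintro ⟨h1, h2⟩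
    have hle : i ≤ nn s := le_trans h2 (le_nn s)
    refine ⟨by omega, ?_⟩
    rw [if_neg (by omega)]
    rcases Nat.even_or_odd i with he | ho
    · have hi : i % 2 = 0 := Nat.even_iff.mp he
      rw [testBit_nn_false s i (by omega),
          (testBit_nn s (i-1)).mpr ⟨by omega, by omega⟩]
      simp
    · have hi : i % 2 = 1 := Nat.odd_iff.mp ho
      rw [(testBit_nn s i).mpr ⟨hi, by omega⟩,
          testBit_nn_false s (i-1) (by omega)]
      simp

def osum (i : ℕ) : ℤ := ∑ k ∈ Finset.range i, (if k % 2 = 1 then (2:ℤ)^k else 0)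

lemma osum_even (j : ℕ) : osum (2*j) = (nn j : ℤ) := by
  induction j with
  | zero => simp [osum, nn_zero]
  | succ j ih =>
    rw [osum, show 2*(j+1) = (2*j) + 1 + 1 from by ring, Finset.sum_range_succ,
        Finset.sum_range_succ, ← osum, ih, nn_succ]
    rw [if_neg (by omega), if_pos (by omega : (2*j+1) % 2 = 1)]
    push_cast
    ring

lemma osum_odd (j : ℕ) : osum (2*j+1) = (nn j : ℤ) := by
  rw [osum, Finset.sum_range_succ, ← osum, osum_even, if_neg (by omega), add_zero]

lemma sum_bits (s i : ℕ) (hi : i ≤ 2*s) :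
    ∑ k ∈ Finset.range i, (bit (nn s) k : ℤ) * 2 ^ k = osum i := by
  rw [osum]
  apply Finset.sum_congr rfl
  intro k hk
  rw [Finset.mem_range] at hk
  by_cases h : k % 2 = 1
  · rw [if_pos h, bit, (testBit_nn s k).mpr ⟨h, by omega⟩]; simp
  · rw [if_neg h, bit, testBit_nn_false s k (fun hc => h hc.1)]; simp

lemma alpha_even (s j : ℕ) (hj : j ≤ s) : alpha (nn s) (2*j) = (nn j : ℤ) := by
  rw [alpha, sum_bits s (2*j) (by omega), osum_even, bit,
      testBit_nn_false s (2*j) (by omega)]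
  simp

lemma alpha_odd (s j : ℕ) (hj : j < s) :
    alpha (nn s) (2*j+1) = 2^(2*j+1) - (nn j : ℤ) := by
  rw [alpha, sum_bits s (2*j+1) (by omega), osum_odd, bit,
      (testBit_nn s (2*j+1)).mpr ⟨by omega, by omega⟩]
  have h : (nn j : ℤ) < 2^(2*j+1) := by
    calc (nn j : ℤ) < 2^(2*j) := by exact_mod_cast nn_lt j
    _ ≤ 2^(2*j+1) := by rw [pow_succ]; nlinarith [pow_pos (by norm_num : (0:ℤ) < 2) (2*j)]
  rw [show ((true.toNat : ℤ)) = 1 from rfl, one_mul, abs_sub_comm,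
      abs_of_nonneg (sub_nonneg.mpr h.le)]

def cR (i : ℕ) : ℝ := if i % 2 = 1 then 2^i - (nn ((i-1)/2) : ℝ) else (nn (i/2) : ℝ)

lemma nn_real (j : ℕ) : (nn j : ℝ) = (2 * 4^j - 2) / 3 := by
  have := three_nn j
  have h : 3 * (nn j : ℝ) + 2 = 2 * 4^j := by exact_mod_cast this
  linarith

lemma key (s : ℕ) : ∑ i ∈ Finset.Icc 1 (2*s), cR i / 2^(i+1)
    = (2/3) * s + (1/9) * (1 - (4:ℝ)^(-(s:ℤ))) := by
  induction s with
  | zero => simp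
  | succ s ih =>
    rw [show 2*(s+1) = (2*s+1)+1 from by ring,
        Finset.sum_Icc_succ_top (by omega : 1 ≤ (2*s+1)+1),
        Finset.sum_Icc_succ_top (by omega : 1 ≤ 2*s+1), ih]
    have hc1 : cR (2*s+1) = 2^(2*s+1) - (nn s : ℝ) := by
      rw [cR, if_pos (by omega)]
      norm_num
    have hc2 : cR (2*s+1+1) = (nn (s+1) : ℝ) := by
      rw [cR, if_neg (by omega)]
      norm_num [show (2*s+1+1)/2 = s+1 from by omega]
    rw [hc1, hc2, nn_real, nn_real]
    have hx : (0:ℝ) < (4:ℝ)^s := by positivity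
    have h1 : (4:ℝ)^(-(s:ℤ)) = ((4:ℝ)^s)⁻¹ := by
      rw [zpow_neg, zpow_natCast]
    have h2 : (4:ℝ)^(-((s+1:ℕ):ℤ)) = ((4:ℝ)^s * 4)⁻¹ := by
      rw [zpow_neg, zpow_natCast, pow_succ]
    have h3 : (2:ℝ)^(2*s+1) = 2 * 4^s := by
      rw [pow_succ, pow_mul]; norm_num; ring
    have h4 : (2:ℝ)^(2*s+1+1) = 4 * 4^s := by
      rw [pow_succ, h3]; ring
    have h5 : (2:ℝ)^(2*s+1+1+1) = 8 * 4^s := by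
      rw [pow_succ, h4]; ring
    have h6 : (4:ℝ)^(s+1) = 4 * 4^s := by rw [pow_succ]; ring
    rw [h2, h3, h4, h5, h6, h1]
    push_cast
    field_simp
    ring


/-- `S(n') = (2/3)s + (1/9)(1 − 4^{−s})` for `n' = ∑_{m=1}^s 2^{2m−1}`. -/
theorem S_alternating (s : ℕ) (hs : 1 ≤ s) :
    S (∑ k ∈ Finset.Icc 1 s, 2^(2*k-1)) =
      (2/3) * s + (1/9) * (1 - (4:ℝ)^(-(s:ℤ))) := by
  have hrw : (∑ k ∈ Finset.Icc 1 s, 2^(2*k-1)) = nn s := rfl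
  rw [hrw, S, Aset_nn, ← key s]
  apply Finset.sum_congr rfl
  intro i hi
  rw [Finset.mem_Icc] at hi
  congr 1
  obtain ⟨j, rfl | rfl⟩ := Nat.even_or_odd' i
  · rw [alpha_even s j (by omega), cR, if_neg (by omega)]
    norm_num
  · rw [alpha_odd s j (by omega), cR, if_pos (by omega)]
    push_cast
    norm_num [show (2*j+1-1)/2 = j from by omega]
end
end

section
/- Let n be a positive integer with binary digits n_i, and let e ≥ 1 satisfy n_e = n_{e−1} ≠ n_{e+1}. Define n(e) by deleting the e-th binary digit and shifting the lower digits up: n(e) = ∑_{i>e} n_i 2^i + ∑_{i<e} n_i 2^{i+1}. Then V(n(e)) = V(n) and S(n(e)) ≤ S(n). -/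
open MeasureTheory Finset

noncomputable section

/-!
Deleting digit `e` of `n` gives the number `n(e)` whose digits agree with those of `2 * n` up to
position `e` and with those of `n` above it. Because `n_e = n_{e-1}`, the sign-change set `A`
is shifted by one below `e` and unchanged above `e`, so `V` is preserved; below `e` the terms of
`S` are unchanged as well, since doubling doubles `α`. Above `e` every signed quantity
`∑_{k<i} n_k 2^k - n_i 2^i` moves by the same `σ`, with `|σ| = α_e(n)`. At `i = e + 1`, where
`n_e ≠ n_{e+1}`, this lowers `α_{e+1}` by exactly `α_e(n)`, at weight `2^{-(e+2)}`; the later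
terms of `S` gain at most `α_e(n) ∑_{i ≥ e+2} 2^{-(i+1)} ≤ α_e(n) 2^{-(e+2)}`.
-/

lemma testBit_two_mul_zero (m : ℕ) : (2 * m).testBit 0 = false := by
  simp

lemma testBit_two_mul_succ (m i : ℕ) : (2 * m).testBit (i + 1) = m.testBit i := by
  rw [Nat.testBit_succ, Nat.mul_div_cancel_left m two_pos]

lemma lt_of_testBit_eq_true {m i : ℕ} (h : m.testBit i = true) : i < m :=
  Nat.lt_two_pow_self.trans_le (Nat.ge_two_pow_of_testBit h)

lemma mem_Aset_iff {m i : ℕ} : i ∈ Aset m ↔ m.testBit i ≠ (2 * m).testBit i := by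
  rw [Aset, mem_filter, mem_range]
  rcases i with _ | i
  · simp only [testBit_two_mul_zero, if_true]
    exact ⟨fun h => by simp [h.2], fun h => ⟨by omega, by simpa using h⟩⟩
  · simp only [testBit_two_mul_succ, Nat.add_one_ne_zero, if_false, Nat.add_sub_cancel,
      decide_eq_true_eq]
    refine ⟨And.right, fun h => ⟨?_, h⟩⟩
    cases hi : m.testBit (i + 1)
    · rw [hi] at h
      have := lt_of_testBit_eq_true ((Bool.not_eq_false _).mp h.symm)
      omega
    · have := lt_of_testBit_eq_true hi
      omega

lemma V_eq_card_Aset (m : ℕ) : V m = #(Aset m) := by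
  rw [Aset, card_filter, sum_range_succ', V]
  simp only [Nat.add_one_ne_zero, if_false, Nat.add_sub_cancel, if_true, add_comm (bit m 0),
    decide_eq_true_eq]
  congr 1
  unfold bit
  cases m.testBit 0 <;> rfl

def deleteDigit (n e : ℕ) : ℕ := n / 2 ^ (e + 1) * 2 ^ (e + 1) + n % 2 ^ e * 2

lemma testBit_deleteDigit (n e i : ℕ) :
    (deleteDigit n e).testBit i = if i ≤ e then (2 * n).testBit i else n.testBit i := by
  have h : deleteDigit n e = 2 ^ (e + 1) * (n / 2 ^ (e + 1)) + 2 * n % 2 ^ (e + 1) := by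
    rw [deleteDigit, pow_succ', Nat.mul_mod_mul_left]
    ring
  rw [h, Nat.testBit_two_pow_mul_add _ (Nat.mod_lt _ (by positivity)), Nat.testBit_mod_two_pow,
    Nat.testBit_div_two_pow]
  by_cases hi : i ≤ e
  · simp [hi, Nat.lt_succ_of_le hi]
  · rw [if_neg (by omega), if_neg hi, Nat.sub_add_cancel (by omega)]

lemma Aset_deleteDigit {n e : ℕ} (he : e ∉ Aset n) :
    Aset (deleteDigit n e) =
      ((Aset n).filter (· < e)).map (addRightEmbedding 1) ∪ (Aset n).filter (e < ·) := by
  rw [mem_Aset_iff, not_not] at he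
  ext j
  rcases j with _ | j
  · simp only [mem_union, mem_map, mem_filter, addRightEmbedding_apply, mem_Aset_iff,
      testBit_deleteDigit, testBit_two_mul_zero]
    simp
  simp only [mem_union, mem_map, mem_filter, addRightEmbedding_apply, mem_Aset_iff,
    Nat.add_right_cancel_iff, exists_eq_right, testBit_two_mul_succ, testBit_deleteDigit]
  rcases lt_trichotomy j e with hj | rfl | hj
  · simp [hj, hj.le, Nat.succ_le_of_lt hj]
  · simp [he]
  · simp [hj.not_gt, hj.not_ge, hj.le]

lemma filter_lt_union_filter_gt_Aset {n e : ℕ} (he : e ∉ Aset n) :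
    (Aset n).filter (· < e) ∪ (Aset n).filter (e < ·) = Aset n := by
  rw [← filter_or, filter_true_of_mem]
  exact fun i hi => lt_or_gt_of_ne (ne_of_mem_of_not_mem hi he)

lemma disjoint_filter_lt_filter_gt (s : Finset ℕ) (e : ℕ) :
    Disjoint (s.filter (· < e)) (s.filter (e < ·)) :=
  disjoint_filter.2 fun _ _ h => h.not_gt

lemma disjoint_map_filter_lt_filter_gt (s : Finset ℕ) (e : ℕ) :
    Disjoint ((s.filter (· < e)).map (addRightEmbedding 1)) (s.filter (e < ·)) := by
  simp only [disjoint_left, mem_map, mem_filter, addRightEmbedding_apply]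
  rintro _ ⟨i, ⟨-, hi⟩, rfl⟩ ⟨-, h⟩
  omega

theorem V_deleteDigit {n e : ℕ} (he : e ∉ Aset n) : V (deleteDigit n e) = V n := by
  rw [V_eq_card_Aset, V_eq_card_Aset, Aset_deleteDigit he,
    card_union_of_disjoint (disjoint_map_filter_lt_filter_gt _ e), card_map,
    ← card_union_of_disjoint (disjoint_filter_lt_filter_gt _ e), filter_lt_union_filter_gt_Aset he]

def lowPart (m i : ℕ) : ℤ := ∑ k ∈ range i, (bit m k : ℤ) * 2 ^ k

def signedAlpha (m i : ℕ) : ℤ := lowPart m i - (bit m i : ℤ) * 2 ^ i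

lemma alpha_eq_abs_signedAlpha (m i : ℕ) : alpha m i = |signedAlpha m i| := rfl

lemma lowPart_succ (m i : ℕ) : lowPart m (i + 1) = lowPart m i + (bit m i : ℤ) * 2 ^ i :=
  sum_range_succ _ _

lemma lowPart_nonneg (m i : ℕ) : 0 ≤ lowPart m i :=
  sum_nonneg fun _ _ => by positivity

lemma lowPart_lt_two_pow (m i : ℕ) : lowPart m i < 2 ^ i := by
  induction i with
  | zero => simp [lowPart]
  | succ i ih =>
    have hbit : (bit m i : ℤ) ≤ 1 := by exact_mod_cast Bool.toNat_le _
    rw [lowPart_succ, pow_succ]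
    nlinarith [pow_pos (two_pos : (0:ℤ) < 2) i]

lemma lowPart_congr {m m' i : ℕ} (h : ∀ k < i, m.testBit k = m'.testBit k) :
    lowPart m i = lowPart m' i :=
  sum_congr rfl fun k hk => by rw [bit, bit, h k (mem_range.1 hk)]

lemma lowPart_sub_lowPart {m m' e i : ℕ} (hei : e ≤ i)
    (h : ∀ k, e ≤ k → k < i → m.testBit k = m'.testBit k) :
    lowPart m' i - lowPart m i = lowPart m' e - lowPart m e := by
  have hIco : ∑ k ∈ Ico e i, (bit m k : ℤ) * 2 ^ k = ∑ k ∈ Ico e i, (bit m' k : ℤ) * 2 ^ k :=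
    sum_congr rfl fun k hk => by rw [mem_Ico] at hk; rw [bit, bit, h k hk.1 hk.2]
  rw [lowPart, lowPart, ← sum_range_add_sum_Ico _ hei, ← sum_range_add_sum_Ico _ hei, hIco,
    lowPart, lowPart]
  ring

lemma lowPart_two_mul (m i : ℕ) : lowPart (2 * m) (i + 1) = 2 * lowPart m i := by
  rw [lowPart, sum_range_succ', lowPart, mul_sum]
  simp only [bit, testBit_two_mul_succ, testBit_two_mul_zero, Bool.toNat_false, Nat.cast_zero,
    zero_mul, add_zero, pow_succ]
  exact sum_congr rfl fun _ _ => by ring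

lemma signedAlpha_congr {m m' i : ℕ} (h : ∀ k ≤ i, m.testBit k = m'.testBit k) :
    signedAlpha m i = signedAlpha m' i := by
  rw [signedAlpha, signedAlpha, lowPart_congr fun k hk => h k hk.le, bit, bit, h i le_rfl]

lemma signedAlpha_two_mul (m i : ℕ) : signedAlpha (2 * m) (i + 1) = 2 * signedAlpha m i := by
  rw [signedAlpha, signedAlpha, lowPart_two_mul, bit, bit, testBit_two_mul_succ, pow_succ]
  ring

lemma abs_signedAlpha_succ_add_alpha {m e : ℕ} (h : m.testBit e ≠ m.testBit (e + 1)) :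
    |signedAlpha m (e + 1) + signedAlpha m e| + alpha m e = alpha m (e + 1) := by
  have h0 := lowPart_nonneg m e
  have h1 := lowPart_lt_two_pow m e
  have hc : m.testBit (e + 1) = !m.testBit e := by
    revert h; cases m.testBit e <;> cases m.testBit (e + 1) <;> decide
  simp only [alpha_eq_abs_signedAlpha, signedAlpha, lowPart_succ, pow_succ, bit, hc]
  cases m.testBit e
  · simp only [Bool.toNat_false, Bool.not_false, Bool.toNat_true, Nat.cast_zero, Nat.cast_one]
    rw [abs_of_nonpos (by linarith), abs_of_nonneg (by linarith), abs_of_nonpos (by linarith)]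
    ring
  · simp only [Bool.toNat_false, Bool.not_true, Bool.toNat_true, Nat.cast_zero, Nat.cast_one]
    rw [abs_of_nonneg (by linarith), abs_of_nonpos (by linarith), abs_of_nonneg (by linarith)]
    ring

lemma signedAlpha_deleteDigit_succ {n e i : ℕ} (h : i < e) :
    signedAlpha (deleteDigit n e) (i + 1) = 2 * signedAlpha n i := by
  rw [← signedAlpha_two_mul]
  exact signedAlpha_congr fun k hk => by rw [testBit_deleteDigit, if_pos (by omega)]

lemma signedAlpha_deleteDigit {n e i : ℕ} (h : e < i) :
    signedAlpha (deleteDigit n e) i = signedAlpha n i + signedAlpha n e := by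
  have hhigh : ∀ k, e < k → (deleteDigit n e).testBit k = n.testBit k := fun k hk => by
    rw [testBit_deleteDigit, if_neg (by omega)]
  have hlow : lowPart (deleteDigit n e) (e + 1) = 2 * lowPart n e :=
    (lowPart_congr fun k hk => by rw [testBit_deleteDigit, if_pos (by omega)]).trans
      (lowPart_two_mul n e)
  have hsplit := lowPart_sub_lowPart (m := n) h fun k hk _ => (hhigh k hk).symm
  rw [hlow, lowPart_succ] at hsplit
  rw [signedAlpha, signedAlpha, signedAlpha, bit, hhigh i h, ← bit]
  linear_combination hsplit

lemma sum_div_two_pow_succ_le {s : Finset ℕ} {a : ℕ} (hs : ∀ i ∈ s, a ≤ i) {c : ℝ}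
    (hc : 0 ≤ c) : ∑ i ∈ s, c / 2 ^ (i + 1) ≤ c / 2 ^ a := by
  have hsum : Summable fun i : ℕ => if a ≤ i then (2 : ℝ)⁻¹ ^ i else 0 :=
    summable_geometric_two.of_nonneg_of_le (fun i => by positivity) fun i => by
      split_ifs <;> simp
  calc ∑ i ∈ s, c / 2 ^ (i + 1)
      = c / 2 * ∑ i ∈ s, if a ≤ i then (2 : ℝ)⁻¹ ^ i else 0 := by
        rw [mul_sum]
        refine sum_congr rfl fun i hi => ?_
        rw [if_pos (hs i hi), pow_succ, inv_pow]
        field_simp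
    _ ≤ c / 2 * ∑' i, if a ≤ i then (2 : ℝ)⁻¹ ^ i else 0 := by
        gcongr
        exact hsum.sum_le_tsum s fun i _ => by positivity
    _ = c / 2 ^ a := by
        rw [tsum_geometric_inv_two_ge, inv_pow]
        field_simp

lemma sum_alpha_deleteDigit_div_le {n e : ℕ} {s : Finset ℕ} (hs : ∀ i ∈ s, e < i)
    (hs' : e + 1 ∈ s) (hne : n.testBit e ≠ n.testBit (e + 1)) :
    ∑ i ∈ s, (alpha (deleteDigit n e) i : ℝ) / 2 ^ (i + 1) ≤
      ∑ i ∈ s, (alpha n i : ℝ) / 2 ^ (i + 1) := by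
  have hfirst : (alpha (deleteDigit n e) (e + 1) : ℝ) = alpha n (e + 1) - alpha n e := by
    rw [eq_sub_iff_add_eq, alpha_eq_abs_signedAlpha (deleteDigit n e),
      signedAlpha_deleteDigit (Nat.lt_succ_self e)]
    exact_mod_cast abs_signedAlpha_succ_add_alpha hne
  have hrest : ∀ i ∈ s.erase (e + 1), (alpha (deleteDigit n e) i : ℝ) / 2 ^ (i + 1) ≤
      alpha n i / 2 ^ (i + 1) + alpha n e / 2 ^ (i + 1) := fun i hi => by
    rw [← add_div]
    gcongr
    rw [alpha_eq_abs_signedAlpha, signedAlpha_deleteDigit (hs i (mem_of_mem_erase hi))]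
    exact_mod_cast abs_add_le _ _
  have htail := sum_div_two_pow_succ_le (s := s.erase (e + 1)) (a := e + 1 + 1)
    (fun i hi => by have := hs i (mem_of_mem_erase hi); have := ne_of_mem_erase hi; omega)
    (c := alpha n e) (Int.cast_nonneg (abs_nonneg _))
  rw [← add_sum_erase s _ hs', ← add_sum_erase s _ hs', hfirst, sub_div]
  have := sum_le_sum hrest
  rw [sum_add_distrib] at this
  linarith

theorem S_deleteDigit_le {n e : ℕ} (he : e ∉ Aset n) (hne : n.testBit e ≠ n.testBit (e + 1)) :
    S (deleteDigit n e) ≤ S n := by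
  have hlow : ∀ i ∈ (Aset n).filter (· < e),
      (alpha (deleteDigit n e) (i + 1) : ℝ) / 2 ^ (i + 1 + 1) = alpha n i / 2 ^ (i + 1) :=
    fun i hi => by
      rw [alpha_eq_abs_signedAlpha, signedAlpha_deleteDigit_succ (mem_filter.1 hi).2, abs_mul,
        alpha_eq_abs_signedAlpha, pow_succ _ (i + 1)]
      push_cast
      field_simp
      ring
  rw [S, S, Aset_deleteDigit he, sum_union (disjoint_map_filter_lt_filter_gt _ e), sum_map,
    ← filter_lt_union_filter_gt_Aset he, sum_union (disjoint_filter_lt_filter_gt _ e),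
    filter_lt_union_filter_gt_Aset he]
  simp only [addRightEmbedding_apply]
  rw [sum_congr rfl hlow]
  refine add_le_add_right (sum_alpha_deleteDigit_div_le (fun i hi => (mem_filter.1 hi).2) ?_ hne) _
  rw [mem_filter, mem_Aset_iff, testBit_two_mul_succ]
  exact ⟨hne.symm, lt_add_one e⟩

theorem V_eq_and_S_le_of_delete_general (n e : ℕ) (he : 1 ≤ e)
    (h1 : n.testBit e = n.testBit (e-1)) (h2 : n.testBit e ≠ n.testBit (e+1)) :
    V (n / 2^(e+1) * 2^(e+1) + (n % 2^e) * 2) = V n ∧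
    S (n / 2^(e+1) * 2^(e+1) + (n % 2^e) * 2) ≤ S n := by
  obtain ⟨k, rfl⟩ : ∃ k, e = k + 1 := ⟨e - 1, by omega⟩
  have hk : k + 1 ∉ Aset n := by
    rw [mem_Aset_iff, testBit_two_mul_succ, not_not]
    exact h1
  exact ⟨V_deleteDigit hk, S_deleteDigit_le hk h2⟩

/-- Deleting the `e`-th binary digit (with `n_e = n_{e−1} ≠ n_{e+1}`) preserves `V`
and does not increase `S`. -/
theorem V_eq_and_S_le_of_delete (n e : ℕ) (hn : 0 < n) (he : 1 ≤ e)
    (h1 : n.testBit e = n.testBit (e-1)) (h2 : n.testBit e ≠ n.testBit (e+1)) :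
    V (n / 2^(e+1) * 2^(e+1) + (n % 2^e) * 2) = V n ∧
    S (n / 2^(e+1) * 2^(e+1) + (n % 2^e) * 2) ≤ S n :=
  V_eq_and_S_le_of_delete_general n e he h1 h2
end
end
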